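/- arXiv:1607.04591 — 2 statements merged into one kernel-verified Lean document; each statement's English description precedes it below -/
import Mathlib

section
/- For real numbers Δ > 0, X, and an integer a with a > X + √2·Δ, the sum Σ_{n=a}^∞ (n−X)² exp(−(n−X)²/Δ²) is strictly less than ((a−X)² + (Δ²/2)(a − X + 1/(1 − exp(−2(a−X)/Δ²)))) exp(−(a−X)²/Δ²). -/
/-- Per-step key inequality: for `x ≥ t` with `t² > 2Δ²`, `t > 0`,
`(x+1) + Δ²/2 ≤ (Δ²/2) exp((2x+1)/Δ²)`. -/
lemma gauss_key_step (Δ t x : ℝ) (hΔ : 0 < Δ) (ht0 : 0 < t) (ht2 : 2 * Δ ^ 2 < t ^ 2)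
    (hx : t ≤ x) :
    (x + 1) + Δ ^ 2 / 2 ≤ Δ ^ 2 / 2 * Real.exp ((2 * x + 1) / Δ ^ 2) := by
  have hΔ2 : (0:ℝ) < Δ ^ 2 := by positivity
  have hx0 : 0 < x := lt_of_lt_of_le ht0 hx
  have hy0 : 0 ≤ (2 * x + 1) / (2 * Δ ^ 2) := by positivity
  have h1 : (1 + (2 * x + 1) / (2 * Δ ^ 2)) ^ 2 ≤ Real.exp ((2 * x + 1) / Δ ^ 2) := by
    have h2 := Real.add_one_le_exp ((2 * x + 1) / (2 * Δ ^ 2))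
    have h3 : (1 + (2 * x + 1) / (2 * Δ ^ 2)) ^ 2
        ≤ Real.exp ((2 * x + 1) / (2 * Δ ^ 2)) ^ 2 := by
      apply pow_le_pow_left₀ (by linarith) (by linarith)
    have h4 : Real.exp ((2 * x + 1) / (2 * Δ ^ 2)) ^ 2
        = Real.exp ((2 * x + 1) / Δ ^ 2) := by
      rw [← Real.exp_nat_mul]
      congr 1
      field_simp
      ring
    rwa [h4] at h3
  have h5 : (x + 1) + Δ ^ 2 / 2 ≤ Δ ^ 2 / 2 * (1 + (2 * x + 1) / (2 * Δ ^ 2)) ^ 2 := by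
    have hexp : Δ ^ 2 / 2 * (1 + (2 * x + 1) / (2 * Δ ^ 2)) ^ 2
        = Δ ^ 2 / 2 + (2 * x + 1) / 2 + (2 * x + 1) ^ 2 / (8 * Δ ^ 2) := by
      field_simp
      ring
    rw [hexp]
    have h6 : 4 * Δ ^ 2 ≤ (2 * x + 1) ^ 2 := by
      nlinarith [sq_nonneg x, sq_le_sq' (by linarith : -x ≤ t) hx]
    have h7 : (1:ℝ) / 2 ≤ (2 * x + 1) ^ 2 / (8 * Δ ^ 2) := by
      rw [le_div_iff₀ (by positivity)]
      nlinarith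
    linarith
  calc (x + 1) + Δ ^ 2 / 2 ≤ Δ ^ 2 / 2 * (1 + (2 * x + 1) / (2 * Δ ^ 2)) ^ 2 := h5
    _ ≤ Δ ^ 2 / 2 * Real.exp ((2 * x + 1) / Δ ^ 2) := by nlinarith [h1]

/-- Bound on the second-moment Gaussian tail sum `∑_{n=a}^∞ (n−X)² exp(−(n−X)²/Δ²)`,
with the sum over integers `n ≥ a` parametrized as `n = a + k`, `k : ℕ`. -/
theorem gaussian_second_moment_tail_sum_bound (Δ X : ℝ) (hΔ : 0 < Δ) (a : ℤ)
    (ha : X + Real.sqrt 2 * Δ < (a : ℝ)) :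
    ∑' k : ℕ, ((a : ℝ) + (k : ℝ) - X) ^ 2 * Real.exp (-((a : ℝ) + (k : ℝ) - X) ^ 2 / Δ ^ 2) <
      (((a : ℝ) - X) ^ 2 +
          Δ ^ 2 / 2 * (((a : ℝ) - X) + 1 / (1 - Real.exp (-2 * ((a : ℝ) - X) / Δ ^ 2)))) *
        Real.exp (-((a : ℝ) - X) ^ 2 / Δ ^ 2) := by
  set t : ℝ := (a : ℝ) - X with hts
  have hΔ2 : (0:ℝ) < Δ ^ 2 := by positivity
  have hst : Real.sqrt 2 * Δ < t := by simp only [hts]; linarith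
  have hs2 : (0:ℝ) < Real.sqrt 2 * Δ := by
    have : (0:ℝ) < Real.sqrt 2 := Real.sqrt_pos.2 (by norm_num)
    positivity
  have ht0 : 0 < t := lt_trans hs2 hst
  have ht2 : 2 * Δ ^ 2 < t ^ 2 := by
    have h := pow_lt_pow_left₀ hst (le_of_lt hs2) (n := 2) (by norm_num)
    have h2 : (Real.sqrt 2 * Δ) ^ 2 = 2 * Δ ^ 2 := by
      rw [mul_pow, Real.sq_sqrt (by norm_num : (0:ℝ) ≤ 2)]
    linarith
  -- notation
  set q : ℝ := Real.exp (-2 * t / Δ ^ 2) with hq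
  have hq0 : 0 < q := Real.exp_pos _
  have hq1 : q < 1 := by
    rw [hq, Real.exp_lt_one_iff]
    exact div_neg_of_neg_of_pos (by linarith) hΔ2
  have h1q : 0 < 1 - q := by linarith
  set c : ℝ := Δ ^ 2 / 2 * Real.exp (-t ^ 2 / Δ ^ 2) with hc
  have hc0 : 0 < c := by positivity
  set u : ℕ → ℝ := fun k => (t + k) ^ 2 * Real.exp (-(t + k) ^ 2 / Δ ^ 2) with hu
  set g : ℕ → ℝ := fun k => Δ ^ 2 / 2 * Real.exp (-(t + k) ^ 2 / Δ ^ 2) with hg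
  set H : ℕ → ℝ := fun k => Δ ^ 2 / 2 * (t + k) * Real.exp (-(t + k) ^ 2 / Δ ^ 2) with hH
  have hgk : ∀ k : ℕ, g k ≤ c * q ^ k := by
    intro k
    have hexp : Real.exp (-(t + k) ^ 2 / Δ ^ 2) ≤ Real.exp (-t ^ 2 / Δ ^ 2) * q ^ k := by
      rw [hq, ← Real.exp_nat_mul, ← Real.exp_add, Real.exp_le_exp]
      have hk2 : (0:ℝ) ≤ (k:ℝ) ^ 2 := by positivity
      have hrw : -t ^ 2 / Δ ^ 2 + (k:ℝ) * (-2 * t / Δ ^ 2)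
          = (-t ^ 2 - 2 * t * (k:ℝ)) / Δ ^ 2 := by ring
      rw [hrw, div_le_div_iff₀ hΔ2 hΔ2]
      nlinarith
    calc g k = Δ ^ 2 / 2 * Real.exp (-(t + k) ^ 2 / Δ ^ 2) := rfl
      _ ≤ Δ ^ 2 / 2 * (Real.exp (-t ^ 2 / Δ ^ 2) * q ^ k) := by
          apply mul_le_mul_of_nonneg_left hexp (by positivity)
      _ = c * q ^ k := by rw [hc]; ring
  have hg1 : g 1 < c * q ^ 1 := by
    have hexp : Real.exp (-(t + 1) ^ 2 / Δ ^ 2) < Real.exp (-t ^ 2 / Δ ^ 2) * q ^ 1 := by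
      rw [hq, pow_one, ← Real.exp_add, Real.exp_lt_exp]
      have hrw : -t ^ 2 / Δ ^ 2 + -2 * t / Δ ^ 2 = (-t ^ 2 - 2 * t) / Δ ^ 2 := by ring
      rw [hrw, div_lt_div_iff₀ hΔ2 hΔ2]
      nlinarith
    calc g 1 = Δ ^ 2 / 2 * Real.exp (-(t + (1:ℕ)) ^ 2 / Δ ^ 2) := rfl
      _ < Δ ^ 2 / 2 * (Real.exp (-t ^ 2 / Δ ^ 2) * q ^ 1) := by
          push_cast
          exact mul_lt_mul_of_pos_left hexp (by positivity)
      _ = c * q ^ 1 := by rw [hc]; ring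
  -- summability of the geometric majorant and of g
  have hgeo : Summable (fun k : ℕ => c * q ^ k) :=
    (summable_geometric_of_lt_one (le_of_lt hq0) hq1).mul_left c
  have hgnn : ∀ k, 0 ≤ g k := fun k => by positivity
  have hgsum : Summable g := Summable.of_nonneg_of_le hgnn hgk hgeo
  -- summability of u
  have hunn : ∀ k, 0 ≤ u k := fun k => by positivity
  have husum : Summable u := by
    have hmaj : Summable (fun k : ℕ => (Real.exp (-t ^ 2 / Δ ^ 2) * t ^ 2) * q ^ k
        + (Real.exp (-t ^ 2 / Δ ^ 2) * (2 * t)) * ((k : ℝ) ^ 1 * q ^ k)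
        + Real.exp (-t ^ 2 / Δ ^ 2) * ((k : ℝ) ^ 2 * q ^ k)) := by
      have hq1' : ‖q‖ < 1 := by rw [Real.norm_eq_abs, abs_of_pos hq0]; exact hq1
      exact (((summable_geometric_of_lt_one (le_of_lt hq0) hq1).mul_left _).add
        ((summable_pow_mul_geometric_of_norm_lt_one 1 hq1').mul_left _)).add
        ((summable_pow_mul_geometric_of_norm_lt_one 2 hq1').mul_left _)
    apply Summable.of_nonneg_of_le hunn _ hmaj
    intro k
    have hexp : Real.exp (-(t + k) ^ 2 / Δ ^ 2) ≤ Real.exp (-t ^ 2 / Δ ^ 2) * q ^ k := by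
      rw [hq, ← Real.exp_nat_mul, ← Real.exp_add, Real.exp_le_exp]
      have hk2 : (0:ℝ) ≤ (k:ℝ) ^ 2 := by positivity
      have hrw : -t ^ 2 / Δ ^ 2 + (k:ℝ) * (-2 * t / Δ ^ 2)
          = (-t ^ 2 - 2 * t * (k:ℝ)) / Δ ^ 2 := by ring
      rw [hrw, div_le_div_iff₀ hΔ2 hΔ2]
      nlinarith
    have hknn : (0:ℝ) ≤ (k:ℝ) := Nat.cast_nonneg k
    calc u k = (t + k) ^ 2 * Real.exp (-(t + k) ^ 2 / Δ ^ 2) := rfl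
      _ ≤ (t + k) ^ 2 * (Real.exp (-t ^ 2 / Δ ^ 2) * q ^ k) :=
          mul_le_mul_of_nonneg_left hexp (by positivity)
      _ = (Real.exp (-t ^ 2 / Δ ^ 2) * t ^ 2) * q ^ k
        + (Real.exp (-t ^ 2 / Δ ^ 2) * (2 * t)) * ((k : ℝ) ^ 1 * q ^ k)
        + Real.exp (-t ^ 2 / Δ ^ 2) * ((k : ℝ) ^ 2 * q ^ k) := by ring
  -- per-term telescoping inequality : u (k+1) + H (k+1) ≤ H k + g k
  have hstep : ∀ k : ℕ, u (k + 1) + H (k + 1) ≤ H k + g k := by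
    intro k
    set x : ℝ := t + k with hx
    have hxt : t ≤ x := by rw [hx]; have : (0:ℝ) ≤ (k:ℝ) := Nat.cast_nonneg k; linarith
    have hx0 : 0 < x := lt_of_lt_of_le ht0 hxt
    have key := gauss_key_step Δ t x hΔ ht0 ht2 hxt
    -- rewrite exp(-x²/Δ²) = exp(-(x+1)²/Δ²) * exp((2x+1)/Δ²)
    have hee : Real.exp (-x ^ 2 / Δ ^ 2)
        = Real.exp (-(x + 1) ^ 2 / Δ ^ 2) * Real.exp ((2 * x + 1) / Δ ^ 2) := by
      rw [← Real.exp_add]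
      congr 1
      field_simp
      ring
    have hcast : (((k : ℕ) + 1 : ℕ) : ℝ) = (k : ℝ) + 1 := by push_cast; ring
    have hgoal : (x + 1) ^ 2 * Real.exp (-(x + 1) ^ 2 / Δ ^ 2)
        + Δ ^ 2 / 2 * (x + 1) * Real.exp (-(x + 1) ^ 2 / Δ ^ 2)
        ≤ Δ ^ 2 / 2 * x * Real.exp (-x ^ 2 / Δ ^ 2)
          + Δ ^ 2 / 2 * Real.exp (-x ^ 2 / Δ ^ 2) := by
      have h2 : Δ ^ 2 / 2 * x * Real.exp (-x ^ 2 / Δ ^ 2)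
          + Δ ^ 2 / 2 * Real.exp (-x ^ 2 / Δ ^ 2)
          = (Δ ^ 2 / 2 * (x + 1)) * Real.exp (-x ^ 2 / Δ ^ 2) := by ring
      rw [h2, hee]
      have h3 : (x + 1) ^ 2 * Real.exp (-(x + 1) ^ 2 / Δ ^ 2)
          + Δ ^ 2 / 2 * (x + 1) * Real.exp (-(x + 1) ^ 2 / Δ ^ 2)
          = ((x + 1) * ((x + 1) + Δ ^ 2 / 2)) * Real.exp (-(x + 1) ^ 2 / Δ ^ 2) := by ring
      have h3' : Δ ^ 2 / 2 * (x + 1)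
            * (Real.exp (-(x + 1) ^ 2 / Δ ^ 2) * Real.exp ((2 * x + 1) / Δ ^ 2))
          = (Δ ^ 2 / 2 * (x + 1) * Real.exp ((2 * x + 1) / Δ ^ 2))
            * Real.exp (-(x + 1) ^ 2 / Δ ^ 2) := by ring
      rw [h3, h3']
      apply mul_le_mul_of_nonneg_right _ (le_of_lt (Real.exp_pos _))
      have h4 : (x + 1) * ((x + 1) + Δ ^ 2 / 2)
          ≤ (x + 1) * (Δ ^ 2 / 2 * Real.exp ((2 * x + 1) / Δ ^ 2)) :=
        mul_le_mul_of_nonneg_left key (by linarith)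
      calc (x + 1) * ((x + 1) + Δ ^ 2 / 2)
          ≤ (x + 1) * (Δ ^ 2 / 2 * Real.exp ((2 * x + 1) / Δ ^ 2)) := h4
        _ = Δ ^ 2 / 2 * (x + 1) * Real.exp ((2 * x + 1) / Δ ^ 2) := by ring
    have hux : u (k + 1) = (x + 1) ^ 2 * Real.exp (-(x + 1) ^ 2 / Δ ^ 2) := by
      simp only [hu, hx, hcast]; ring_nf
    have hHx : H (k + 1) = Δ ^ 2 / 2 * (x + 1) * Real.exp (-(x + 1) ^ 2 / Δ ^ 2) := by
      simp only [hH, hx, hcast]; ring_nf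
    have hHk : H k = Δ ^ 2 / 2 * x * Real.exp (-x ^ 2 / Δ ^ 2) := rfl
    have hgkk : g k = Δ ^ 2 / 2 * Real.exp (-x ^ 2 / Δ ^ 2) := rfl
    rw [hux, hHx, hHk, hgkk]
    exact hgoal
  -- partial sums of the tail are bounded
  have hHnn : ∀ k, 0 ≤ H k := by
    intro k
    have : (0:ℝ) ≤ (k:ℝ) := Nat.cast_nonneg k
    have : 0 ≤ t + k := by linarith
    positivity
  have hpartial : ∀ N : ℕ, ∑ k ∈ Finset.range N, u (k + 1) ≤ H 0 + ∑' k, g k := by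
    intro N
    have h1 : ∑ k ∈ Finset.range N, u (k + 1)
        ≤ ∑ k ∈ Finset.range N, (H k - H (k + 1) + g k) := by
      apply Finset.sum_le_sum
      intro k _
      have := hstep k
      linarith
    have h2 : ∑ k ∈ Finset.range N, (H k - H (k + 1) + g k)
        = (H 0 - H N) + ∑ k ∈ Finset.range N, g k := by
      rw [Finset.sum_add_distrib, Finset.sum_range_sub' H N]
    have h3 : ∑ k ∈ Finset.range N, g k ≤ ∑' k, g k :=
      Summable.sum_le_tsum _ (fun k _ => hgnn k) hgsum
    have h4 := hHnn N
    linarith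
  have husucc : Summable (fun k : ℕ => u (k + 1)) := (summable_nat_add_iff 1).2 husum
  have htail : ∑' k : ℕ, u (k + 1) ≤ H 0 + ∑' k, g k :=
    Summable.tsum_le_of_sum_range_le husucc hpartial
  -- strict bound on ∑ g
  have hgtsum : ∑' k, g k < ∑' k : ℕ, c * q ^ k :=
    Summable.tsum_lt_tsum hgk hg1 hgsum hgeo
  have hgeoval : ∑' k : ℕ, c * q ^ k = c / (1 - q) := by
    rw [tsum_mul_left, tsum_geometric_of_lt_one (le_of_lt hq0) hq1, div_eq_mul_inv]
  -- put it together
  have hmain : ∑' k, u k < u 0 + H 0 + c / (1 - q) := by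
    rw [Summable.tsum_eq_zero_add husum]
    have : ∑' k : ℕ, u (k + 1) < H 0 + c / (1 - q) := by
      calc ∑' k : ℕ, u (k + 1) ≤ H 0 + ∑' k, g k := htail
        _ < H 0 + c / (1 - q) := by rw [← hgeoval]; linarith
    linarith
  -- identify both sides
  have hLHS : (∑' k : ℕ, ((a : ℝ) + (k : ℝ) - X) ^ 2
      * Real.exp (-((a : ℝ) + (k : ℝ) - X) ^ 2 / Δ ^ 2)) = ∑' k, u k := by
    apply tsum_congr
    intro k
    have : (a : ℝ) + (k : ℝ) - X = t + k := by rw [hts]; ring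
    rw [this]
  have hRHS : (t ^ 2 + Δ ^ 2 / 2 * (t + 1 / (1 - q))) * Real.exp (-t ^ 2 / Δ ^ 2)
      = u 0 + H 0 + c / (1 - q) := by
    have hu0 : u 0 = t ^ 2 * Real.exp (-t ^ 2 / Δ ^ 2) := by
      simp only [hu, Nat.cast_zero, add_zero]
    have hH0 : H 0 = Δ ^ 2 / 2 * t * Real.exp (-t ^ 2 / Δ ^ 2) := by
      simp only [hH, Nat.cast_zero, add_zero]
    rw [hu0, hH0, hc]
    field_simp
    ring
  rw [hLHS]
  calc ∑' k, u k < u 0 + H 0 + c / (1 - q) := hmain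
    _ = (t ^ 2 + Δ ^ 2 / 2 * (t + 1 / (1 - q))) * Real.exp (-t ^ 2 / Δ ^ 2) := hRHS.symm
end

section
/- Suppose x_r ∈ (0, π) and n ∈ ℕ⁺ satisfy cos(x_r) ≤ 1 − 1/n. Then the function x ↦ cos^{2n}(x/2) is convex on [x_r, π], and consequently ∫_{x_r}^π cos^{2n}(x/2) dx ≤ ((π − x_r)/2) · cos^{2n}(x_r/2). -/
/-- If `cos x_r ≤ 1 − 1/n` then `x ↦ cos^{2n}(x/2)` is convex on `[x_r, π]`, and its
integral over `[x_r, π]` is bounded by the chord value `((π − x_r)/2) cos^{2n}(x_r/2)`. -/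
theorem cos_pow_convex_and_integral_bound (n : ℕ) (hn : 0 < n) (xr : ℝ)
    (hx : xr ∈ Set.Ioo 0 Real.pi) (hcos : Real.cos xr ≤ 1 - 1 / (n : ℝ)) :
    ConvexOn ℝ (Set.Icc xr Real.pi) (fun x => Real.cos (x / 2) ^ (2 * n)) ∧
      (∫ x in xr..Real.pi, Real.cos (x / 2) ^ (2 * n)) ≤
        (Real.pi - xr) / 2 * Real.cos (xr / 2) ^ (2 * n) := by
  obtain ⟨hx0, hxpi⟩ := hx
  have hnR : (0:ℝ) < n := by exact_mod_cast hn
  -- derivative setup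
  have hhalf : ∀ x : ℝ, HasDerivAt (fun y : ℝ => Real.cos (y / 2)) (-Real.sin (x / 2) * (1/2)) x := by
    intro x
    simpa [Function.comp_def] using (Real.hasDerivAt_cos (x/2)).comp x ((hasDerivAt_id x).div_const 2)
  have hsinhalf : ∀ x : ℝ, HasDerivAt (fun y : ℝ => Real.sin (y / 2)) (Real.cos (x / 2) * (1/2)) x := by
    intro x
    simpa [Function.comp_def] using (Real.hasDerivAt_sin (x/2)).comp x ((hasDerivAt_id x).div_const 2)
  set f' : ℝ → ℝ := fun x => -(n:ℝ) * (Real.cos (x/2) ^ (2*n - 1) * Real.sin (x/2)) with hf'def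
  have hf' : ∀ x : ℝ, HasDerivAt (fun y => Real.cos (y / 2) ^ (2 * n)) (f' x) x := by
    intro x
    have := (hhalf x).pow (2*n)
    refine this.congr_deriv (Eq.symm ?_)
    rw [hf'def, show ((2*n:ℕ):ℝ) = 2*(n:ℝ) by push_cast; ring]
    ring
  set f'' : ℝ → ℝ := fun x => (n:ℝ)/2 * Real.cos (x/2) ^ (2*n - 2) * (2*(n:ℝ) * Real.sin (x/2)^2 - 1) with hf''def
  have hf'' : ∀ x : ℝ, HasDerivAt f' (f'' x) x := by
    intro x
    have h1 : HasDerivAt (fun y => Real.cos (y/2) ^ (2*n-1) * Real.sin (y/2))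
        (((2*n-1 : ℕ) * Real.cos (x/2) ^ (2*n - 1 - 1) * (-Real.sin (x/2) * (1/2))) * Real.sin (x/2)
          + Real.cos (x/2) ^ (2*n-1) * (Real.cos (x/2) * (1/2))) x :=
      ((hhalf x).pow (2*n-1)).mul (hsinhalf x)
    have h2 := h1.const_mul (-(n:ℝ))
    refine h2.congr_deriv (Eq.symm ?_)
    have e1 : 2*n - 1 - 1 = 2*n - 2 := by omega
    have e2 : (2*n - 2) + 1 = 2*n - 1 := by omega
    have e3 : (2*n - 2) + 2 = 2*n := by omega
    have hpyth : Real.cos (x/2)^2 = 1 - Real.sin (x/2)^2 := by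
      have := Real.sin_sq_add_cos_sq (x/2); linarith
    rw [hf''def, e1]
    have c1 : Real.cos (x/2) ^ (2*n-1) = Real.cos (x/2) ^ (2*n-2) * Real.cos (x/2) := by
      rw [← pow_succ, e2]
    have hn1 : ((2*n-1 : ℕ) : ℝ) = 2*(n:ℝ) - 1 := by push_cast [Nat.cast_sub (by omega : 1 ≤ 2*n)]; ring
    rw [c1, hn1]
    linear_combination ((n:ℝ)/2 * Real.cos (x/2) ^ (2*n-2)) * hpyth
  -- convexity
  have hD : Convex ℝ (Set.Icc xr Real.pi) := convex_Icc _ _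
  have hf''nonneg : ∀ x ∈ interior (Set.Icc xr Real.pi), 0 ≤ f'' x := by
    intro x hxm
    rw [interior_Icc] at hxm
    obtain ⟨hx1, hx2⟩ := hxm
    have hcosle : Real.cos x ≤ Real.cos xr :=
      Real.cos_le_cos_of_nonneg_of_le_pi hx0.le hx2.le hx1.le
    have hsin : 2 * Real.sin (x/2)^2 = 1 - Real.cos x := by
      have h := Real.sin_sq_eq_half_sub (x/2)
      rw [show 2*(x/2) = x by ring] at h
      linarith
    have key : 1 ≤ 2*(n:ℝ) * Real.sin (x/2)^2 := by
      have h1 : 1 / (n:ℝ) ≤ 1 - Real.cos x := by linarith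
      have := (div_le_iff₀ hnR).mp h1
      nlinarith
    have hpow : 0 ≤ Real.cos (x/2) ^ (2*n - 2) := by
      have : 2*n - 2 = 2*(n-1) := by omega
      rw [this, pow_mul]
      positivity
    have : 0 ≤ (n:ℝ)/2 * Real.cos (x/2) ^ (2*n-2) := by positivity
    rw [hf''def]
    nlinarith
  have hconv : ConvexOn ℝ (Set.Icc xr Real.pi) (fun x => Real.cos (x / 2) ^ (2 * n)) := by
    refine convexOn_of_hasDerivWithinAt2_nonneg hD ?_ (fun x _ => (hf' x).hasDerivWithinAt)
      (fun x _ => (hf'' x).hasDerivWithinAt) hf''nonneg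
    exact (Continuous.pow (Real.continuous_cos.comp (continuous_id.div_const 2)) _).continuousOn
  refine ⟨hconv, ?_⟩
  -- integral bound
  have hlt : xr < Real.pi := hxpi
  have hne : Real.pi - xr ≠ 0 := by linarith
  set c := Real.cos (xr/2) ^ (2*n) with hc
  have hfpi : Real.cos (Real.pi/2) ^ (2*n) = 0 := by
    rw [Real.cos_pi_div_two]; exact zero_pow (by omega)
  have hchord : ∀ x ∈ Set.Icc xr Real.pi,
      Real.cos (x/2) ^ (2*n) ≤ (Real.pi - x)/(Real.pi - xr) * c := by
    intro x ⟨ha, hb⟩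
    have haa : 0 ≤ (Real.pi - x)/(Real.pi - xr) := by
      apply div_nonneg <;> linarith
    have hbb : 0 ≤ (x - xr)/(Real.pi - xr) := by
      apply div_nonneg <;> linarith
    have hab : (Real.pi - x)/(Real.pi - xr) + (x - xr)/(Real.pi - xr) = 1 := by
      field_simp; ring
    have := hconv.2 (Set.left_mem_Icc.mpr hlt.le) (Set.right_mem_Icc.mpr hlt.le) haa hbb hab
    simp only [smul_eq_mul] at this
    have hcomb : (Real.pi - x)/(Real.pi - xr) * xr + (x - xr)/(Real.pi - xr) * Real.pi = x := by
      field_simp; ring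
    rw [hcomb] at this
    calc Real.cos (x/2) ^ (2*n) ≤ (Real.pi - x)/(Real.pi - xr) * c
          + (x - xr)/(Real.pi - xr) * Real.cos (Real.pi/2) ^ (2*n) := this
      _ = (Real.pi - x)/(Real.pi - xr) * c := by rw [hfpi]; ring
  have hint : (∫ x in xr..Real.pi, Real.cos (x / 2) ^ (2 * n)) ≤
      ∫ x in xr..Real.pi, (Real.pi - x)/(Real.pi - xr) * c := by
    apply intervalIntegral.integral_mono_on hlt.le
    · exact ((Real.continuous_cos.comp (continuous_id.div_const 2)).pow _).intervalIntegrable _ _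
    · exact (((continuous_const.sub continuous_id).div_const _).mul continuous_const).intervalIntegrable _ _
    · intro x hxm; exact hchord x hxm
  have hcalc : (∫ x in xr..Real.pi, (Real.pi - x)/(Real.pi - xr) * c)
      = (Real.pi - xr)/2 * c := by
    have : ∀ x : ℝ, (Real.pi - x)/(Real.pi - xr) * c = c/(Real.pi - xr) * (Real.pi - x) := by
      intro x; ring
    simp_rw [this]
    rw [intervalIntegral.integral_const_mul]
    rw [intervalIntegral.integral_sub (intervalIntegrable_const) (intervalIntegral.intervalIntegrable_id)]
    rw [intervalIntegral.integral_const, integral_id, smul_eq_mul]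
    field_simp
    ring
  rw [hc] at hint hcalc
  linarith [hint, hcalc.le]
end
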